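/- (Sparse sampling accuracy, full theorem.) Consider the finite-horizon game model: S finite, A finite nonempty, P(·|s,a) a transition kernel, τ the player function, h : S → [−v_max, v_max] the evaluation. Define V_d by the depth-d minimax recursion, and define the estimator V̂_d(s) by the same recursion except that at each state-action pair, V̂_d(s,a) = (1/c)Σ_{i=1}^c V̂_{d−1}(s_i) with s₁,…,s_c drawn i.i.d. from P(·|s,a) (all samples across the recursion independent). Then for every state s, every λ ∈ (0, 2v_max], every d ≥ 0: P(|V̂_d(s) − V_d(s)| ≤ λd) ≥ 1 − (2c|A|)^d exp(−λ²c/(2v_max²)). -/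

import Mathlib

/-!
Induction on the depth. Both backups, the choice of the player over the actions and the average
over the `c` samples, are `1`-Lipschitz for the sup norm. So if the estimate at a node is off by
more than `λ (d + 1)`, then for some action `a` either the sample average of the exact values
`V_d` deviates from its mean by more than `λ`, which by Hoeffding's inequality has probability at
most `2 ε` with `ε = exp (-λ² c / (2 v_max²))`, or one of the `c` sampled children is off by more
than `λ d`. Whether a child is off is decided by the samples of its own subtree, which are
independent of the sample that selected the child, so the second event has probability at most
the bound `x_d` at depth `d`. This gives `x_{d+1} ≤ |A| (2 ε + c x_d)`, and the solution
`2 |A| ε ∑_{k<d} (c |A|)^k` of this recursion is at most `(2 c |A|)^d ε`.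
-/

open MeasureTheory ProbabilityTheory Finset

lemma integral_comp_eq_sum_of_measure_preimage {Ω S : Type*} {mΩ : MeasurableSpace Ω}
    {μ : Measure Ω} [IsFiniteMeasure μ] [Fintype S] [MeasurableSpace S]
    [MeasurableSingletonClass S] {Z : Ω → S} (hZ : Measurable Z) {q : S → ℝ}
    (hq0 : ∀ s, 0 ≤ q s) (hq : ∀ s, μ (Z ⁻¹' {s}) = ENNReal.ofReal (q s)) (f : S → ℝ) :
    ∫ ω, f (Z ω) ∂μ = ∑ s, q s * f s := by
  rw [← integral_map hZ.aemeasurable (measurable_of_finite f).aestronglyMeasurable,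
    integral_fintype .of_finite]
  refine sum_congr rfl fun s _ ↦ ?_
  rw [smul_eq_mul, measureReal_def, Measure.map_apply hZ (measurableSet_singleton s), hq,
    ENNReal.toReal_ofReal (hq0 s)]

section Hoeffding

variable {Ω : Type*} {mΩ : MeasurableSpace Ω} {μ : Measure Ω} [IsProbabilityMeasure μ]
  {c : ℕ} {Y : Fin c → Ω → ℝ} {M m t : ℝ}

lemma measure_le_sum_sub_le (hc : 0 < c) (hY : iIndepFun Y μ) (hmeas : ∀ i, Measurable (Y i))
    (hbdd : ∀ i ω, |Y i ω| ≤ M) (hmean : ∀ i, μ[Y i] = m) (ht : 0 ≤ t) :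
    μ {ω | c * t ≤ ∑ i, (Y i ω - m)} ≤ ENNReal.ofReal (Real.exp (-t ^ 2 * c / (2 * M ^ 2))) := by
  have hsubG : ∀ i ∈ (univ : Finset (Fin c)),
      HasSubgaussianMGF (fun ω ↦ Y i ω - m) ((‖M - -M‖₊ / 2) ^ 2) μ := fun i _ ↦ by
    simpa only [hmean] using hasSubgaussianMGF_of_mem_Icc (μ := μ) (hmeas i).aemeasurable
      (ae_of_all _ fun ω ↦ abs_le.1 (hbdd i ω))
  have hoeffding := HasSubgaussianMGF.measure_sum_ge_le_of_iIndepFun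
    (hY.comp (fun _ x ↦ x - m) fun _ ↦ measurable_id.sub_const m) hsubG (by positivity : 0 ≤ c * t)
  rw [← ofReal_measureReal]
  refine ENNReal.ofReal_le_ofReal (hoeffding.trans_eq ?_)
  have hc' : (c : ℝ) ≠ 0 := by positivity
  congr 1
  simp only [sum_const, card_univ, Fintype.card_fin, nsmul_eq_mul, NNReal.coe_mul,
    NNReal.coe_natCast, NNReal.coe_pow, NNReal.coe_div, NNReal.coe_ofNat, coe_nnnorm,
    Real.norm_eq_abs, sub_neg_eq_add, ← two_mul, abs_mul, abs_two]
  rw [mul_div_cancel_left₀ _ two_ne_zero, sq_abs,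
    show -(c * t) ^ 2 / (2 * (c * M ^ 2)) = c * (-t ^ 2 * c) / (c * (2 * M ^ 2)) by ring,
    mul_div_mul_left _ _ hc']

lemma measure_lt_abs_avg_sub_le (hc : 0 < c) (hY : iIndepFun Y μ)
    (hmeas : ∀ i, Measurable (Y i)) (hbdd : ∀ i ω, |Y i ω| ≤ M) (hmean : ∀ i, μ[Y i] = m)
    (ht : 0 ≤ t) :
    μ {ω | t < |(1 / c : ℝ) * ∑ i, Y i ω - m|} ≤
      2 * ENNReal.ofReal (Real.exp (-t ^ 2 * c / (2 * M ^ 2))) := by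
  have hupper := measure_le_sum_sub_le hc hY hmeas hbdd hmean ht
  have hlower := measure_le_sum_sub_le (Y := fun i ω ↦ -Y i ω) (m := -m) hc
    (hY.comp (fun _ x ↦ -x) fun _ ↦ measurable_neg) (fun i ↦ (hmeas i).neg)
    (by simpa only [abs_neg] using hbdd) (fun i ↦ by rw [integral_neg, hmean]) ht
  have hsplit : {ω | t < |(1 / c : ℝ) * ∑ i, Y i ω - m|} ⊆
      {ω | c * t ≤ ∑ i, (Y i ω - m)} ∪ {ω | c * t ≤ ∑ i, (-Y i ω - -m)} := by
    intro ω (hω : t < _)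
    have hc' : (0 : ℝ) < c := by exact_mod_cast hc
    have havg : ∑ i, (Y i ω - m) = c * ((1 / c : ℝ) * ∑ i, Y i ω - m) := by
      rw [sum_sub_distrib, sum_const, card_univ, Fintype.card_fin, nsmul_eq_mul]
      field_simp
    have hneg : ∑ i, (-Y i ω - -m) = -∑ i, (Y i ω - m) := by
      rw [← sum_neg_distrib]; exact sum_congr rfl fun i _ ↦ by ring
    rcases lt_abs.1 hω with h | h
    · left; show (c : ℝ) * t ≤ _; rw [havg]; gcongr
    · right; show (c : ℝ) * t ≤ _; rw [hneg, havg, ← mul_neg]; gcongr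
  calc _ ≤ _ := measure_mono hsplit
    _ ≤ _ := measure_union_le _ _
    _ ≤ _ := add_le_add hupper hlower
    _ = _ := (two_mul _).symm

lemma measure_lt_abs_avg_comp_sub_le {S : Type*} [Fintype S] [MeasurableSpace S]
    [MeasurableSingletonClass S] {Z : Fin c → Ω → S} (hc : 0 < c) (hZ : iIndepFun Z μ)
    (hmeas : ∀ i, Measurable (Z i)) {q : S → ℝ} (hq0 : ∀ s, 0 ≤ q s)
    (hq : ∀ i s, μ (Z i ⁻¹' {s}) = ENNReal.ofReal (q s)) {f : S → ℝ} (hf : ∀ s, |f s| ≤ M)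
    (ht : 0 ≤ t) :
    μ {ω | t < |(1 / c : ℝ) * ∑ i, f (Z i ω) - ∑ s, q s * f s|} ≤
      2 * ENNReal.ofReal (Real.exp (-t ^ 2 * c / (2 * M ^ 2))) :=
  measure_lt_abs_avg_sub_le hc (hZ.comp (fun _ ↦ f) fun _ ↦ measurable_of_finite f)
    (fun i ↦ (measurable_of_finite f).comp (hmeas i)) (fun i ω ↦ hf (Z i ω))
    (fun i ↦ integral_comp_eq_sum_of_measure_preimage (hmeas i) hq0 (hq i) f) ht

end Hoeffding

section Subtree

variable {Ω α β S : Type*} [MeasurableSpace S]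

/-- Paths are stored leaf first (a child of `p` is `x :: p`), so the samples drawn at or below
the node `p` are those whose path has `p` as a suffix. -/
def subtree (p : List α) : Set (List α × β) := {j | p <:+ j.1}

abbrev subtreeSigma (X : List α × β → Ω → S) (p : List α) : MeasurableSpace Ω :=
  ⨆ j ∈ subtree p, MeasurableSpace.comap (X j) ‹_›

variable (X : List α × β → Ω → S)

lemma subtreeSigma_cons_le (x : α) (p : List α) : subtreeSigma X (x :: p) ≤ subtreeSigma X p :=
  biSup_mono fun _ hj ↦ (List.suffix_cons x p).trans hj

lemma comap_le_subtreeSigma {p : List α} {j : List α × β} (hj : j ∈ subtree p) :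
    MeasurableSpace.comap (X j) ‹_› ≤ subtreeSigma X p :=
  le_iSup₂ (f := fun j (_ : j ∈ subtree p) ↦ MeasurableSpace.comap (X j) ‹_›) j hj

lemma measurable_subtreeSigma (p : List α) (b : β) : Measurable[subtreeSigma X p] (X (p, b)) :=
  (comap_measurable (X (p, b))).mono (comap_le_subtreeSigma X (List.suffix_refl p)) le_rfl

lemma measure_preimage_inter_eq_mul [MeasurableSingletonClass S] {mΩ : MeasurableSpace Ω}
    {μ : Measure Ω} (hmeas : ∀ j, Measurable (X j)) (hX : iIndepFun X μ) (p : List α) (x : α)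
    (b : β) (s : S) {F : Set Ω} (hF : MeasurableSet[subtreeSigma X (x :: p)] F) :
    μ (X (p, b) ⁻¹' {s} ∩ F) = μ (X (p, b) ⁻¹' {s}) * μ F := by
  have hdisj : Disjoint {(p, b)} (subtree (x :: p)) := by
    refine Set.disjoint_singleton_left.2 fun h ↦ ?_
    have := (h : x :: p <:+ p).length_le
    simp at this
  have hindep : Indep (⨆ j ∈ ({(p, b)} : Set (List α × β)), MeasurableSpace.comap (X j) ‹_›)
      (subtreeSigma X (x :: p)) μ :=
    indep_iSup_of_disjoint (fun j ↦ (hmeas j).comap_le) ((iIndepFun_iff_iIndep _ _ _).1 hX) hdisj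
  rw [_root_.iSup_singleton] at hindep
  exact (Indep_iff _ _ _).1 hindep _ _ ⟨{s}, measurableSet_singleton s, rfl⟩ hF

end Subtree

lemma sub_le_dist_pi {ι : Type*} [Fintype ι] (x y : ι → ℝ) (i : ι) : x i - y i ≤ dist x y :=
  (le_abs_self _).trans ((Real.dist_eq _ _).symm.trans_le (dist_le_pi_dist x y i))

lemma LipschitzWith.exists_lt_abs_sub {ι : Type*} [Fintype ι] {f : (ι → ℝ) → ℝ}
    (hf : LipschitzWith 1 f) {q q' : ι → ℝ} {e : ℝ} (he : 0 ≤ e) (h : e < |f q - f q'|) :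
    ∃ i, e < |q i - q' i| := by
  by_contra! hle
  have hdist : dist q q' ≤ e := (dist_pi_le_iff he).2 fun i ↦ (Real.dist_eq _ _).trans_le (hle i)
  have := hf.dist_le_mul q q'
  rw [Real.dist_eq, NNReal.coe_one, one_mul] at this
  linarith

lemma lipschitzWith_avg (c : ℕ) : LipschitzWith 1 fun x : Fin c → ℝ ↦ (1 / c : ℝ) * ∑ i, x i := by
  refine LipschitzWith.of_le_add fun x y ↦ ?_
  have hsum : ∑ i, x i - ∑ i, y i ≤ c * dist x y := by
    rw [← sum_sub_distrib]
    simpa using sum_le_card_nsmul univ _ _ fun i _ ↦ sub_le_dist_pi x y i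
  calc (1 / c : ℝ) * ∑ i, x i ≤ (1 / c : ℝ) * ∑ i, y i + (1 / c : ℝ) * (c * dist x y) := by
        rw [← mul_add]; gcongr; linarith
    _ = (1 / c : ℝ) * ∑ i, y i + (c / c : ℝ) * dist x y := by ring
    _ ≤ (1 / c : ℝ) * ∑ i, y i + dist x y := by
        gcongr
        exact mul_le_of_le_one_left dist_nonneg (div_self_le_one _)

section SparseSampling

variable {Ω S A : Type*} [Fintype S] [Fintype A]
  {c : ℕ} {step : S → (A → ℝ) → ℝ} {h : S → ℝ} {V : ℕ → S → ℝ}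
  {Vhat : ℕ → List (A × Fin c) → S → Ω → ℝ} {X : List (A × Fin c) × S × A × Fin c → Ω → S}
  {P : S → A → S → ℝ} {lam : ℝ}

lemma error_succ_subset (hstep : ∀ s, LipschitzWith 1 (step s))
    (hV : ∀ d s, V (d + 1) s = step s fun a ↦ ∑ s', P s a s' * V d s')
    (hVhat : ∀ d p s ω, Vhat (d + 1) p s ω =
      step s fun a ↦ (1 / c : ℝ) * ∑ i : Fin c, Vhat d ((a, i) :: p) (X (p, s, a, i) ω) ω)
    (hlam : 0 ≤ lam) (d : ℕ) (p : List (A × Fin c)) (s : S) :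
    {ω | lam * ((d + 1 : ℕ) : ℝ) < |Vhat (d + 1) p s ω - V (d + 1) s|} ⊆
      ⋃ a, ({ω | lam < |(1 / c : ℝ) * ∑ i, V d (X (p, s, a, i) ω) - ∑ s', P s a s' * V d s'|} ∪
        ⋃ i, ⋃ s', X (p, s, a, i) ⁻¹' {s'} ∩
          {ω | lam * d < |Vhat d ((a, i) :: p) s' ω - V d s'|}) := by
  intro ω (hω : lam * _ < _)
  rw [hVhat, hV] at hω
  obtain ⟨a, ha⟩ := (hstep s).exists_lt_abs_sub (by positivity) hω
  refine Set.mem_iUnion.2 ⟨a, ?_⟩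
  by_cases hmean : lam < |(1 / c : ℝ) * ∑ i, V d (X (p, s, a, i) ω) - ∑ s', P s a s' * V d s'|
  · exact Or.inl hmean
  have hsub : lam * d < |(1 / c : ℝ) * ∑ i, Vhat d ((a, i) :: p) (X (p, s, a, i) ω) ω -
      (1 / c : ℝ) * ∑ i, V d (X (p, s, a, i) ω)| := by
    have := abs_sub_le ((1 / c : ℝ) * ∑ i, Vhat d ((a, i) :: p) (X (p, s, a, i) ω) ω)
      ((1 / c : ℝ) * ∑ i, V d (X (p, s, a, i) ω)) (∑ s', P s a s' * V d s')
    push_cast at ha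
    linarith
  obtain ⟨i, hi⟩ := (lipschitzWith_avg c).exists_lt_abs_sub (by positivity) hsub
  exact Or.inr <| Set.mem_iUnion₂.2 ⟨i, X (p, s, a, i) ω, rfl, hi⟩

variable [MeasurableSpace S] [MeasurableSingletonClass S]

lemma measurable_estimate_subtreeSigma (hstep : ∀ s, LipschitzWith 1 (step s))
    (hVhat0 : ∀ p s ω, Vhat 0 p s ω = h s)
    (hVhat : ∀ d p s ω, Vhat (d + 1) p s ω =
      step s fun a ↦ (1 / c : ℝ) * ∑ i : Fin c, Vhat d ((a, i) :: p) (X (p, s, a, i) ω) ω)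
    (d : ℕ) (p : List (A × Fin c)) (s : S) : Measurable[subtreeSigma X p] (Vhat d p s) := by
  induction d generalizing p s with
  | zero =>
    rw [show Vhat 0 p s = fun _ ↦ h s from funext (hVhat0 p s)]
    exact measurable_const
  | succ d ih =>
    let _ : MeasurableSpace Ω := subtreeSigma X p
    have hchild : ∀ a i, Measurable fun ω ↦ Vhat d ((a, i) :: p) (X (p, s, a, i) ω) ω := by
      intro a i
      have hjoint : Measurable fun z : S × Ω ↦ Vhat d ((a, i) :: p) z.1 z.2 :=
        measurable_from_prod_countable_right fun s' ↦
          (ih _ s').mono (subtreeSigma_cons_le X _ p) le_rfl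
      exact hjoint.comp ((measurable_subtreeSigma X p (s, a, i)).prodMk measurable_id)
    rw [show Vhat (d + 1) p s = _ from funext (hVhat d p s)]
    exact (hstep s).continuous.measurable.comp <| measurable_pi_lambda _ fun a ↦
      measurable_const.mul <| Finset.measurable_sum _ fun i _ ↦ hchild a i

lemma measure_error_succ_le {mΩ : MeasurableSpace Ω} {μ : Measure Ω} [IsProbabilityMeasure μ]
    (hc : 0 < c) (hstep : ∀ s, LipschitzWith 1 (step s)) (hP0 : ∀ s a s', 0 ≤ P s a s')
    (hP1 : ∀ s a, ∑ s', P s a s' = 1)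
    (hV : ∀ d s, V (d + 1) s = step s fun a ↦ ∑ s', P s a s' * V d s')
    {M : ℝ} (hVbdd : ∀ d s, |V d s| ≤ M)
    (hmeas : ∀ j, Measurable (X j)) (hX : iIndepFun X μ)
    (hlaw : ∀ p s a i s', μ (X (p, s, a, i) ⁻¹' {s'}) = ENNReal.ofReal (P s a s'))
    (hVhat0 : ∀ p s ω, Vhat 0 p s ω = h s)
    (hVhat : ∀ d p s ω, Vhat (d + 1) p s ω =
      step s fun a ↦ (1 / c : ℝ) * ∑ i : Fin c, Vhat d ((a, i) :: p) (X (p, s, a, i) ω) ω)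
    (hlam : 0 ≤ lam) {d : ℕ} {G : ENNReal}
    (hG : ∀ p s, μ {ω | lam * d < |Vhat d p s ω - V d s|} ≤ G) (p : List (A × Fin c)) (s : S) :
    μ {ω | lam * ((d + 1 : ℕ) : ℝ) < |Vhat (d + 1) p s ω - V (d + 1) s|} ≤
      Fintype.card A * (2 * ENNReal.ofReal (Real.exp (-lam ^ 2 * c / (2 * M ^ 2))) + c * G) := by
  have hmean (a : A) := measure_lt_abs_avg_comp_sub_le hc
    (hX.precomp (g := fun i : Fin c ↦ (p, s, a, i)) fun i j hij ↦ by simpa using hij)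
    (fun i ↦ hmeas _) (hP0 s a) (fun i ↦ hlaw p s a i) (hVbdd d) hlam
  have hchild (a : A) (i : Fin c) (s' : S) :
      μ (X (p, s, a, i) ⁻¹' {s'} ∩ {ω | lam * d < |Vhat d ((a, i) :: p) s' ω - V d s'|}) ≤
        ENNReal.ofReal (P s a s') * G := by
    rw [measure_preimage_inter_eq_mul X hmeas hX p (a, i) (s, a, i) s', hlaw]
    · exact mul_le_mul_right (hG _ _) _
    · exact measurableSet_lt measurable_const <| measurable_abs.comp <|
      (measurable_estimate_subtreeSigma hstep hVhat0 hVhat d _ s').sub_const _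
  have hlaw_sum (a : A) : ∑ s', ENNReal.ofReal (P s a s') = 1 := by
    rw [← ENNReal.ofReal_sum_of_nonneg fun s' _ ↦ hP0 s a s', hP1, ENNReal.ofReal_one]
  calc _ ≤ _ := measure_mono (error_succ_subset hstep hV hVhat hlam d p s)
    _ ≤ ∑ a, (μ {ω | lam < |(1 / c : ℝ) * ∑ i, V d (X (p, s, a, i) ω) -
            ∑ s', P s a s' * V d s'|} +
          ∑ i : Fin c, ∑ s', μ (X (p, s, a, i) ⁻¹' {s'} ∩
            {ω | lam * d < |Vhat d ((a, i) :: p) s' ω - V d s'|})) := by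
      refine (measure_iUnion_fintype_le _ _).trans (sum_le_sum fun a _ ↦ ?_)
      refine (measure_union_le _ _).trans (add_le_add_right ?_ _)
      exact (measure_iUnion_fintype_le _ _).trans
        (sum_le_sum fun i _ ↦ measure_iUnion_fintype_le _ _)
    _ ≤ ∑ a : A, (2 * ENNReal.ofReal (Real.exp (-lam ^ 2 * c / (2 * M ^ 2))) +
          ∑ i : Fin c, ∑ s', ENNReal.ofReal (P s a s') * G) := by
      gcongr with a _ i _ s'
      exacts [hmean a, hchild a i s']
    _ = _ := by simp [← sum_mul, hlaw_sum, mul_add]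

lemma measure_error_le {mΩ : MeasurableSpace Ω} {μ : Measure Ω} [IsProbabilityMeasure μ]
    (hc : 0 < c) (hstep : ∀ s, LipschitzWith 1 (step s)) (hP0 : ∀ s a s', 0 ≤ P s a s')
    (hP1 : ∀ s a, ∑ s', P s a s' = 1) (hV0 : ∀ s, V 0 s = h s)
    (hV : ∀ d s, V (d + 1) s = step s fun a ↦ ∑ s', P s a s' * V d s')
    {M : ℝ} (hVbdd : ∀ d s, |V d s| ≤ M)
    (hmeas : ∀ j, Measurable (X j)) (hX : iIndepFun X μ)
    (hlaw : ∀ p s a i s', μ (X (p, s, a, i) ⁻¹' {s'}) = ENNReal.ofReal (P s a s'))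
    (hVhat0 : ∀ p s ω, Vhat 0 p s ω = h s)
    (hVhat : ∀ d p s ω, Vhat (d + 1) p s ω =
      step s fun a ↦ (1 / c : ℝ) * ∑ i : Fin c, Vhat d ((a, i) :: p) (X (p, s, a, i) ω) ω)
    (hlam : 0 ≤ lam) (d : ℕ) (p : List (A × Fin c)) (s : S) :
    μ {ω | lam * d < |Vhat d p s ω - V d s|} ≤
      ((2 * Fintype.card A * ∑ k ∈ range d, (c * Fintype.card A) ^ k : ℕ) : ENNReal) *
        ENNReal.ofReal (Real.exp (-lam ^ 2 * c / (2 * M ^ 2))) := by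
  induction d generalizing p s with
  | zero => simp [hVhat0, hV0]
  | succ d ih =>
    refine (measure_error_succ_le hc hstep hP0 hP1 hV hVbdd hmeas hX hlaw hVhat0 hVhat hlam
      ih p s).trans_eq ?_
    rw [geom_sum_succ]
    push_cast
    ring

end SparseSampling

lemma two_mul_mul_geom_sum_le_pow {a c : ℕ} (hc : 1 ≤ c) (d : ℕ) :
    2 * a * ∑ k ∈ range d, (c * a) ^ k ≤ (2 * c * a) ^ d := by
  induction d with
  | zero => simp
  | succ d ih =>
    rcases Nat.eq_zero_or_pos d with rfl | hd
    · simpa using Nat.mul_le_mul_right a (Nat.mul_le_mul_left 2 hc)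
    have h2a : 2 * a ≤ c * a * (2 * c * a) ^ d := by
      rcases Nat.eq_zero_or_pos a with rfl | ha
      · simp
      have h2 : 2 ≤ (2 * c * a) ^ d :=
        le_trans (by nlinarith) (Nat.le_self_pow hd.ne' (2 * c * a))
      calc 2 * a = a * 2 := Nat.mul_comm 2 a
        _ ≤ c * a * (2 * c * a) ^ d := Nat.mul_le_mul (Nat.le_mul_of_pos_left a hc) h2
    calc 2 * a * ∑ k ∈ range (d + 1), (c * a) ^ k
        = c * a * (2 * a * ∑ k ∈ range d, (c * a) ^ k) + 2 * a := by rw [geom_sum_succ]; ring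
      _ ≤ c * a * (2 * c * a) ^ d + c * a * (2 * c * a) ^ d := by gcongr
      _ = (2 * c * a) ^ (d + 1) := by ring

lemma abs_sum_mul_le {ι : Type*} [Fintype ι] {q f : ι → ℝ} (hq0 : ∀ i, 0 ≤ q i)
    (hq1 : ∑ i, q i = 1) {M : ℝ} (hf : ∀ i, |f i| ≤ M) : |∑ i, q i * f i| ≤ M :=
  calc |∑ i, q i * f i| ≤ ∑ i, |q i * f i| := abs_sum_le_sum_abs _ _
    _ ≤ ∑ i, q i * M := sum_le_sum fun i _ ↦ by
        rw [abs_mul, abs_of_nonneg (hq0 i)]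
        exact mul_le_mul_of_nonneg_left (hf i) (hq0 i)
    _ = M := by rw [← sum_mul, hq1, one_mul]

section Minimax

variable {S A : Type*} [Fintype A] [Nonempty A]

open Classical in
noncomputable def minimaxStep (T : Set S) (τ : S → Fin 2) (h : S → ℝ) (s : S) (q : A → ℝ) : ℝ :=
  if s ∈ T then h s else if τ s = 0 then univ.sup' univ_nonempty q else univ.inf' univ_nonempty q

variable {T : Set S} {τ : S → Fin 2} {h : S → ℝ}

lemma eq_minimaxStep {s : S} {q : A → ℝ} {x : ℝ} (hT : s ∈ T → x = h s)
    (hmax : s ∉ T → τ s = 0 → x = univ.sup' univ_nonempty q)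
    (hmin : s ∉ T → τ s = 1 → x = univ.inf' univ_nonempty q) :
    x = minimaxStep T τ h s q := by
  unfold minimaxStep
  split_ifs with hs hτ
  exacts [hT hs, hmax hs hτ, hmin hs (Fin.eq_one_of_ne_zero _ hτ)]

lemma lipschitzWith_sup' : LipschitzWith 1 fun q : A → ℝ ↦ univ.sup' univ_nonempty q :=
  LipschitzWith.of_le_add fun q q' ↦ sup'_le _ _ fun a _ ↦ by
    linarith [le_sup' q' (mem_univ a), sub_le_dist_pi q q' a]

lemma lipschitzWith_inf' : LipschitzWith 1 fun q : A → ℝ ↦ univ.inf' univ_nonempty q :=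
  LipschitzWith.of_le_add fun q q' ↦ by
    obtain ⟨a, -, ha⟩ := exists_mem_eq_inf' univ_nonempty q'
    linarith [inf'_le q (mem_univ a), sub_le_dist_pi q q' a]

lemma lipschitzWith_minimaxStep (s : S) : LipschitzWith 1 (minimaxStep (A := A) T τ h s) := by
  by_cases hs : s ∈ T
  · rw [show minimaxStep T τ h s = fun _ ↦ h s from funext fun _ ↦ if_pos hs]
    exact LipschitzWith.const' _
  by_cases hτ : τ s = 0
  · rw [show minimaxStep T τ h s = fun q ↦ univ.sup' univ_nonempty q from
      funext fun _ ↦ (if_neg hs).trans (if_pos hτ)]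
    exact lipschitzWith_sup'
  · rw [show minimaxStep T τ h s = fun q ↦ univ.inf' univ_nonempty q from
      funext fun _ ↦ (if_neg hs).trans (if_neg hτ)]
    exact lipschitzWith_inf'

lemma abs_minimaxStep_le {M : ℝ} {s : S} {q : A → ℝ} (hh : |h s| ≤ M) (hq : ∀ a, |q a| ≤ M) :
    |minimaxStep T τ h s q| ≤ M := by
  unfold minimaxStep
  split_ifs
  · exact hh
  · obtain ⟨a, -, ha⟩ := exists_mem_eq_sup' univ_nonempty q
    exact ha ▸ hq a
  · obtain ⟨a, -, ha⟩ := exists_mem_eq_inf' univ_nonempty q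
    exact ha ▸ hq a

lemma abs_minimax_value_le [Fintype S] {P : S → A → S → ℝ} {V : ℕ → S → ℝ} {M : ℝ}
    (hP0 : ∀ s a s', 0 ≤ P s a s') (hP1 : ∀ s a, ∑ s', P s a s' = 1) (hh : ∀ s, |h s| ≤ M)
    (hV0 : ∀ s, V 0 s = h s)
    (hV : ∀ d s, V (d + 1) s = minimaxStep T τ h s fun a ↦ ∑ s', P s a s' * V d s') :
    ∀ d s, |V d s| ≤ M := by
  intro d
  induction d with
  | zero => exact fun s ↦ hV0 s ▸ hh s
  | succ d ih => exact fun s ↦ (hV d s) ▸ abs_minimaxStep_le (hh s) fun a ↦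
      abs_sum_mul_le (hP0 s a) (hP1 s a) ih

end Minimax

theorem mcms_sparse_sampling_general {Ω : Type*} [MeasureSpace Ω]
    [IsProbabilityMeasure (volume : Measure Ω)]
    {S A : Type*} [Fintype S] [MeasurableSpace S] [MeasurableSingletonClass S]
    [Fintype A] [Nonempty A]
    (T : Set S) (P : S → A → S → ℝ) (τ : S → Fin 2) (h : S → ℝ)
    (hP0 : ∀ s a s', 0 ≤ P s a s') (hP1 : ∀ s a, ∑ s', P s a s' = 1)
    (c : ℕ) (hc : 1 ≤ c) (vmax : ℝ)
    (hh : ∀ s, -vmax ≤ h s ∧ h s ≤ vmax)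
    -- the true depth-d minimax values
    (V : ℕ → S → ℝ)
    (hV0 : ∀ s, V 0 s = h s)
    (hVT : ∀ d s, s ∈ T → V (d + 1) s = h s)
    (hVmax : ∀ d s, s ∉ T → τ s = 0 →
      V (d + 1) s = Finset.univ.sup' Finset.univ_nonempty
        (fun a : A => ∑ s', P s a s' * V d s'))
    (hVmin : ∀ d s, s ∉ T → τ s = 1 →
      V (d + 1) s = Finset.univ.inf' Finset.univ_nonempty
        (fun a : A => ∑ s', P s a s' * V d s'))
    -- the sampling scheme: independent samples, each distributed according to P(·|s,a)
    (samp : List (A × Fin c) → S → A → Fin c → Ω → S)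
    (hmeas : ∀ p s a i, Measurable (samp p s a i))
    (hindep : iIndepFun
      (fun (q : List (A × Fin c) × S × A × Fin c) ω => samp q.1 q.2.1 q.2.2.1 q.2.2.2 ω) volume)
    (hdist : ∀ p s a i s', volume {ω | samp p s a i ω = s'} = ENNReal.ofReal (P s a s'))
    -- the sparse-sampling estimator
    (Vhat : ℕ → List (A × Fin c) → S → Ω → ℝ)
    (hVhat0 : ∀ p s ω, Vhat 0 p s ω = h s)
    (hVhatT : ∀ d p s ω, s ∈ T → Vhat (d + 1) p s ω = h s)
    (hVhatMax : ∀ d p s ω, s ∉ T → τ s = 0 →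
      Vhat (d + 1) p s ω = Finset.univ.sup' Finset.univ_nonempty
        (fun a : A => (1 / c : ℝ) * ∑ i : Fin c, Vhat d ((a, i) :: p) (samp p s a i ω) ω))
    (hVhatMin : ∀ d p s ω, s ∉ T → τ s = 1 →
      Vhat (d + 1) p s ω = Finset.univ.inf' Finset.univ_nonempty
        (fun a : A => (1 / c : ℝ) * ∑ i : Fin c, Vhat d ((a, i) :: p) (samp p s a i ω) ω)) :
    ∀ (s : S) (lam : ℝ), 0 < lam → lam ≤ 2 * vmax → ∀ d : ℕ,
      1 - ((2 * c * Fintype.card A : ℕ) : ENNReal) ^ d *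
          ENNReal.ofReal (Real.exp (-lam ^ 2 * c / (2 * vmax ^ 2))) ≤
        volume {ω | |Vhat d ([] : List (A × Fin c)) s ω - V d s| ≤ lam * d} := by
  intro s lam hlam _ d
  have hV d s := eq_minimaxStep (hVT d s) (hVmax d s) (hVmin d s)
  have hVhat d p s ω := eq_minimaxStep (hVhatT d p s ω) (hVhatMax d p s ω) (hVhatMin d p s ω)
  have hbad := measure_error_le (X := fun q ω ↦ samp q.1 q.2.1 q.2.2.1 q.2.2.2 ω) hc
    lipschitzWith_minimaxStep hP0 hP1 hV0 hV
    (abs_minimax_value_le hP0 hP1 (fun s ↦ abs_le.2 (hh s)) hV0 hV) (fun _ ↦ hmeas _ _ _ _)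
    hindep hdist hVhat0 hVhat hlam.le d [] s
  rw [tsub_le_iff_right]
  calc 1 = volume (Set.univ : Set Ω) := measure_univ.symm
    _ ≤ _ := measure_univ_le_add_compl _
    _ ≤ _ := by
      gcongr
      simp only [Set.compl_ofPred, not_le]
      refine hbad.trans ?_
      gcongr
      exact_mod_cast two_mul_mul_geom_sum_le_pow hc d

/-- Theorem 1 of the paper: sparse sampling accuracy for adversarial games.
`samp p s a i` is the `i`-th successor state sampled from `P(·|s,a)` at the tree node
identified by the path `p` from the root; all these samples are mutually independent.
`V` is the depth-`d` minimax value and `Vhat` the sparse-sampling estimator. -/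
theorem mcms_sparse_sampling {Ω : Type*} [MeasureSpace Ω]
    [IsProbabilityMeasure (volume : Measure Ω)]
    {S A : Type*} [Fintype S] [MeasurableSpace S] [MeasurableSingletonClass S]
    [Fintype A] [Nonempty A]
    (T : Set S) (P : S → A → S → ℝ) (τ : S → Fin 2) (h : S → ℝ)
    (hP0 : ∀ s a s', 0 ≤ P s a s') (hP1 : ∀ s a, ∑ s', P s a s' = 1)
    (c : ℕ) (hc : 1 ≤ c) (vmax : ℝ) (hvmax : 0 < vmax)
    (hh : ∀ s, -vmax ≤ h s ∧ h s ≤ vmax)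
    -- the true depth-d minimax values
    (V : ℕ → S → ℝ)
    (hV0 : ∀ s, V 0 s = h s)
    (hVT : ∀ d s, s ∈ T → V (d + 1) s = h s)
    (hVmax : ∀ d s, s ∉ T → τ s = 0 →
      V (d + 1) s = Finset.univ.sup' Finset.univ_nonempty
        (fun a : A => ∑ s', P s a s' * V d s'))
    (hVmin : ∀ d s, s ∉ T → τ s = 1 →
      V (d + 1) s = Finset.univ.inf' Finset.univ_nonempty
        (fun a : A => ∑ s', P s a s' * V d s'))
    -- the sampling scheme: independent samples, each distributed according to P(·|s,a)
    (samp : List (A × Fin c) → S → A → Fin c → Ω → S)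
    (hmeas : ∀ p s a i, Measurable (samp p s a i))
    (hindep : iIndepFun
      (fun (q : List (A × Fin c) × S × A × Fin c) ω => samp q.1 q.2.1 q.2.2.1 q.2.2.2 ω) volume)
    (hdist : ∀ p s a i s', volume {ω | samp p s a i ω = s'} = ENNReal.ofReal (P s a s'))
    -- the sparse-sampling estimator
    (Vhat : ℕ → List (A × Fin c) → S → Ω → ℝ)
    (hVhat0 : ∀ p s ω, Vhat 0 p s ω = h s)
    (hVhatT : ∀ d p s ω, s ∈ T → Vhat (d + 1) p s ω = h s)
    (hVhatMax : ∀ d p s ω, s ∉ T → τ s = 0 →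
      Vhat (d + 1) p s ω = Finset.univ.sup' Finset.univ_nonempty
        (fun a : A => (1 / c : ℝ) * ∑ i : Fin c, Vhat d ((a, i) :: p) (samp p s a i ω) ω))
    (hVhatMin : ∀ d p s ω, s ∉ T → τ s = 1 →
      Vhat (d + 1) p s ω = Finset.univ.inf' Finset.univ_nonempty
        (fun a : A => (1 / c : ℝ) * ∑ i : Fin c, Vhat d ((a, i) :: p) (samp p s a i ω) ω)) :
    ∀ (s : S) (lam : ℝ), 0 < lam → lam ≤ 2 * vmax → ∀ d : ℕ,
      1 - ((2 * c * Fintype.card A : ℕ) : ENNReal) ^ d *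
          ENNReal.ofReal (Real.exp (-lam ^ 2 * c / (2 * vmax ^ 2))) ≤
        volume {ω | |Vhat d ([] : List (A × Fin c)) s ω - V d s| ≤ lam * d} :=
  mcms_sparse_sampling_general T P τ h hP0 hP1 c hc vmax hh V hV0 hVT hVmax hVmin samp hmeas hindep
    hdist Vhat hVhat0 hVhatT hVhatMax hVhatMin
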